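/- Let n ≥ 1, m ≥ 1, and d = 2m + 1 with d ≥ 3. Let T ∈ S^d ℂ^{n+1} be a nonzero form of degree d and let A ⊆ ℙⁿ(ℂ) be a non-redundant finite set computing T, with r = ℓ(A). Assume h_A(1) = min{n+1, r}, k_m(A) = r, and 2·(r − h_A(m−1)) ≤ min{n − 1, m − 1}. Then T has rank r and T is identifiable (A is the unique set of cardinality r computing T). -/

import Mathlib

open MvPolynomial

noncomputable section

/-- Projective n-space over ℂ, viewed as classes of linear forms (vectors in ℂ^{n+1}). -/
abbrev Proj (n : ℕ) := Projectivization ℂ (Fin (n + 1) → ℂ)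

instance (n : ℕ) : DecidableEq (Proj n) := Classical.decEq _

/-- The linear form with coefficient vector `v`. -/
def linForm (n : ℕ) (v : Fin (n + 1) → ℂ) : MvPolynomial (Fin (n + 1)) ℂ :=
  ∑ i, MvPolynomial.C (v i) * MvPolynomial.X i

/-- The `d`-th Veronese image of a projective point: the `d`-th power of (a representative of)
the corresponding linear form. -/
def vero (n d : ℕ) (P : Proj n) : MvPolynomial (Fin (n + 1)) ℂ :=
  linForm n P.rep ^ d

/-- `A` computes `T` : the class of `T` lies in the projective linear span of `v_d(A)`,
equivalently `T` lies in the linear span of the `d`-th powers of the points of `A`. -/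
def Computes (n d : ℕ) (A : Finset (Proj n)) (T : MvPolynomial (Fin (n + 1)) ℂ) : Prop :=
  T ∈ Submodule.span ℂ (vero n d '' (A : Set (Proj n)))

/-- `A` is a non-redundant set computing `T`. -/
def NRComputes (n d : ℕ) (A : Finset (Proj n)) (T : MvPolynomial (Fin (n + 1)) ℂ) : Prop :=
  Computes n d A T ∧ ∀ A' ⊂ A, ¬ Computes n d A' T

/-- The (Waring) rank of `T` : minimal cardinality of a finite set computing `T`. -/
def waringRank (n d : ℕ) (T : MvPolynomial (Fin (n + 1)) ℂ) : ℕ :=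
  sInf {r | ∃ A : Finset (Proj n), A.card = r ∧ Computes n d A T}

/-- `T` is identifiable: there is exactly one finite set computing `T` whose
cardinality equals the rank of `T`. -/
def Identifiable (n d : ℕ) (T : MvPolynomial (Fin (n + 1)) ℂ) : Prop :=
  ∃! A : Finset (Proj n), A.card = waringRank n d T ∧ Computes n d A T

/-- The evaluation map of degree `j` on the chosen homogeneous coordinates of `Z`. -/
def evalMap (n j : ℕ) (Z : Finset (Proj n)) :
    MvPolynomial.homogeneousSubmodule (Fin (n + 1)) ℂ j →ₗ[ℂ] (Z → ℂ) where
  toFun F := fun P => MvPolynomial.eval (P.1).rep F.1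
  map_add' F G := by funext P; simp
  map_smul' c F := by funext P; simp

/-- The Hilbert function of the finite set `Z` (at a natural number `j`). -/
def hilbN (n : ℕ) (Z : Finset (Proj n)) (j : ℕ) : ℕ :=
  Module.finrank ℂ (LinearMap.range (evalMap n j Z))

/-- The Hilbert function of the finite set `Z` (zero in negative degrees). -/
def hilb (n : ℕ) (Z : Finset (Proj n)) (j : ℤ) : ℕ :=
  if j < 0 then 0 else hilbN n Z j.toNat

/-- The first difference of the Hilbert function. -/
def Dhilb (n : ℕ) (Z : Finset (Proj n)) (j : ℤ) : ℤ :=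
  (hilb n Z j : ℤ) - (hilb n Z (j - 1) : ℤ)

/-- The `d`-th Kruskal rank of `A` : the largest `k` such that every subset of `A`
with at most `k` elements has linearly independent image under `v_d`. -/
def kruskalRank (n d : ℕ) (A : Finset (Proj n)) : ℕ :=
  sSup {k | k ≤ A.card ∧
    ∀ A' ⊆ A, A'.card ≤ k → LinearIndependent ℂ (fun P : A' => vero n d P.1)}

/-- The Cayley–Bacharach property in degree `d` for the finite set `Z`. -/
def CB (n d : ℕ) (Z : Finset (Proj n)) : Prop :=
  ∀ P ∈ Z, ∀ F : MvPolynomial (Fin (n + 1)) ℂ, F.IsHomogeneous d →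
    (∀ Q ∈ Z, Q ≠ P → MvPolynomial.eval Q.rep F = 0) → MvPolynomial.eval P.rep F = 0

end

/-!
Write `T = ∑_{P ∈ A} a_P L_P^d` with all `a_P ≠ 0` (non-redundancy). Since the `L_P^m` are
linearly independent (`k_m(A) = r`), so are the `L_P^t` for `t ≥ m`, and then the functions
`P ↦ (c ⬝ᵥ P)^t`, `c ∈ ℂ^{n+1}`, span all functions on `A`. The `t`-th directional derivative
`D_c^t T` is a multiple of `∑ a_P (c ⬝ᵥ P)^t L_P^(d-t)`, so every `L_P^(d-t)` is a combination of
derivatives of `T`, and these lie in the span of the `L_Q^(d-t)` for any `B` computing `T`.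
With `d ≥ 2m+1` and `t = d-m-1` this puts the `r`-dimensional span of the `L_P^(m+1)`, `P ∈ A`,
inside that of the `L_Q^(m+1)`, `Q ∈ B`: hence `|B| ≥ r`, and the spans agree when `|B| = r`.
Finally, if `L_Q^(m+1)` lies in the span of the `L_P^(m+1)` but `Q ∉ A`, differentiating along a
`c` with `c ⬝ᵥ Q = 0 ≠ c ⬝ᵥ P` kills the coefficient of `L_P^(m+1)`, by independence of the
`L_P^m`; so `L_Q^(m+1) = 0`, which is absurd.
-/

section

open scoped ComplexOrder

variable {n : ℕ}

lemma eval_linForm (v w : Fin (n + 1) → ℂ) : eval w (linForm n v) = v ⬝ᵥ w := by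
  simp [linForm, dotProduct]

lemma linForm_ne_zero {v : Fin (n + 1) → ℂ} (hv : v ≠ 0) : linForm n v ≠ 0 := by
  intro h
  have := eval_linForm v (star v)
  rw [h, map_zero, eq_comm, dotProduct_self_star_eq_zero] at this
  exact hv this

lemma exists_dotProduct_eq_dual (f : Module.Dual ℂ (Fin (n + 1) → ℂ)) :
    ∃ c : Fin (n + 1) → ℂ, ∀ v, c ⬝ᵥ v = f v := by
  classical
  refine ⟨fun i => f fun j => if i = j then 1 else 0, fun v => ?_⟩
  rw [f.pi_apply_eq_sum_univ v, dotProduct]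
  exact Finset.sum_congr rfl fun i _ => mul_comm _ _

lemma exists_dotProduct_rep_eq_zero_ne_zero {P Q : Proj n} (hPQ : P ≠ Q) :
    ∃ c : Fin (n + 1) → ℂ, c ⬝ᵥ Q.rep = 0 ∧ c ⬝ᵥ P.rep ≠ 0 := by
  have hP : P.rep ∉ Submodule.span ℂ {Q.rep} := by
    rintro hP
    obtain ⟨a, ha⟩ := Submodule.mem_span_singleton.mp hP
    apply hPQ
    rw [← P.mk_rep, ← Q.mk_rep, Projectivization.mk_eq_mk_iff']
    exact ⟨a, ha⟩
  obtain ⟨f, hfP, hfQ⟩ := Submodule.exists_dual_map_eq_bot_of_notMem hP inferInstance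
  obtain ⟨c, hc⟩ := exists_dotProduct_eq_dual f
  have hQ : f Q.rep ∈ Submodule.map f (Submodule.span ℂ {Q.rep}) :=
    Submodule.mem_map_of_mem (Submodule.mem_span_singleton_self _)
  rw [hfQ, Submodule.mem_bot] at hQ
  exact ⟨c, by rw [hc, hQ], by rwa [hc]⟩

noncomputable def dirDeriv (c : Fin (n + 1) → ℂ) :
    Derivation ℂ (MvPolynomial (Fin (n + 1)) ℂ) (MvPolynomial (Fin (n + 1)) ℂ) :=
  ∑ i, c i • pderiv i

lemma dirDeriv_apply (c : Fin (n + 1) → ℂ) (p : MvPolynomial (Fin (n + 1)) ℂ) :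
    dirDeriv c p = ∑ i, c i • pderiv i p := by
  rw [dirDeriv, ← Derivation.coeFnAddMonoidHom_apply, map_sum, Finset.sum_apply]
  rfl

lemma dirDeriv_linForm (c v : Fin (n + 1) → ℂ) : dirDeriv c (linForm n v) = C (c ⬝ᵥ v) := by
  simp [dirDeriv_apply, linForm, pderiv_X, Pi.single_apply, dotProduct, smul_eq_C_mul, mul_comm]

lemma dirDeriv_linForm_pow_succ (c v : Fin (n + 1) → ℂ) (k : ℕ) :
    dirDeriv c (linForm n v ^ (k + 1)) = ((k + 1 : ℂ) * (c ⬝ᵥ v)) • linForm n v ^ k := by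
  rw [Derivation.leibniz_pow, dirDeriv_linForm, Nat.add_sub_cancel, smul_eq_C_mul, map_mul]
  simp only [nsmul_eq_mul, smul_eq_mul, Nat.cast_add, Nat.cast_one, map_add, map_one,
    map_natCast]
  ring

lemma dirDeriv_pow_apply_linForm_pow (c v : Fin (n + 1) → ℂ) (k t : ℕ) :
    ((dirDeriv c).toLinearMap ^ t) (linForm n v ^ (k + t))
      = (((k + t).descFactorial t : ℂ) * (c ⬝ᵥ v) ^ t) • linForm n v ^ k := by
  induction t with
  | zero => simp
  | succ t ih =>
    rw [pow_succ, Module.End.mul_apply, ← add_assoc, Derivation.coeFn_coe,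
      dirDeriv_linForm_pow_succ, map_smul, ih, smul_smul, Nat.succ_descFactorial_succ]
    push_cast
    ring_nf

noncomputable def veroSpan (n t : ℕ) (Z : Finset (Proj n)) :
    Submodule ℂ (MvPolynomial (Fin (n + 1)) ℂ) :=
  Submodule.span ℂ (vero n t '' (Z : Set (Proj n)))

instance (t : ℕ) (Z : Finset (Proj n)) : Module.Finite ℂ (veroSpan n t Z) :=
  Module.Finite.span_of_finite ℂ (Z.finite_toSet.image _)

lemma veroSpan_eq_span_range (t : ℕ) (Z : Finset (Proj n)) :
    veroSpan n t Z = Submodule.span ℂ (Set.range fun P : Z => vero n t P.1) := by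
  rw [veroSpan, Set.image_eq_range]
  rfl

lemma mem_veroSpan_iff {t : ℕ} {Z : Finset (Proj n)} {F : MvPolynomial (Fin (n + 1)) ℂ} :
    F ∈ veroSpan n t Z ↔ ∃ a : Z → ℂ, ∑ P, a P • vero n t P.1 = F := by
  rw [veroSpan_eq_span_range, Submodule.mem_span_range_iff_exists_fun]

lemma finrank_veroSpan_le_card (t : ℕ) (Z : Finset (Proj n)) :
    Module.finrank ℂ (veroSpan n t Z) ≤ Z.card := by
  rw [veroSpan_eq_span_range]
  exact (finrank_range_le_card _).trans_eq (Fintype.card_coe Z)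

lemma finrank_veroSpan_of_linearIndependent {t : ℕ} {Z : Finset (Proj n)}
    (hli : LinearIndependent ℂ fun P : Z => vero n t P.1) :
    Module.finrank ℂ (veroSpan n t Z) = Z.card := by
  rw [veroSpan_eq_span_range, finrank_span_eq_card hli, Fintype.card_coe]

lemma NRComputes.exists_sum_eq {d : ℕ} {A : Finset (Proj n)} {T : MvPolynomial (Fin (n + 1)) ℂ}
    (hA : NRComputes n d A T) : ∃ a : A → ℂ, (∀ P, a P ≠ 0) ∧ ∑ P, a P • vero n d P.1 = T := by
  obtain ⟨a, ha⟩ := mem_veroSpan_iff.mp hA.1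
  refine ⟨a, fun P₀ hP₀ => hA.2 (A.erase P₀) (Finset.erase_ssubset P₀.2) ?_, ha⟩
  rw [Computes, ← ha, ← Finset.sum_erase_add _ _ (Finset.mem_univ P₀), hP₀, zero_smul, add_zero]
  refine Submodule.sum_mem _ fun P hP => Submodule.smul_mem _ _ (Submodule.subset_span ?_)
  exact ⟨P.1, Finset.mem_erase.mpr ⟨Subtype.coe_injective.ne (Finset.ne_of_mem_erase hP), P.2⟩,
    rfl⟩

section Independence

variable {A : Finset (Proj n)} {t : ℕ}

lemma mul_dotProduct_eq_zero_of_dirDeriv_sum_eq_zero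
    (hli : LinearIndependent ℂ fun P : A => vero n t P.1) {g : A → ℂ} {c : Fin (n + 1) → ℂ}
    (h : dirDeriv c (∑ P, g P • vero n (t + 1) P.1) = 0) (P : A) : g P * (c ⬝ᵥ P.1.rep) = 0 := by
  simp only [map_sum, Derivation.map_smul, vero, dirDeriv_linForm_pow_succ, smul_smul] at h
  have hP := Fintype.linearIndependent_iff.mp hli _ h P
  rw [mul_left_comm, mul_eq_zero] at hP
  exact hP.resolve_left (Nat.cast_add_one_ne_zero t)

lemma linearIndependent_vero_succ (hli : LinearIndependent ℂ fun P : A => vero n t P.1) :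
    LinearIndependent ℂ fun P : A => vero n (t + 1) P.1 := by
  refine Fintype.linearIndependent_iff.mpr fun g hg P => ?_
  have hc : star P.1.rep ⬝ᵥ P.1.rep ≠ 0 := by
    rw [Ne, dotProduct_star_self_eq_zero]
    exact P.1.rep_nonzero
  have hD : dirDeriv (star P.1.rep) (∑ Q, g Q • vero n (t + 1) Q.1) = 0 := by rw [hg, map_zero]
  exact (mul_eq_zero.mp (mul_dotProduct_eq_zero_of_dirDeriv_sum_eq_zero hli hD P)).resolve_right hc

lemma linearIndependent_vero_of_le {m : ℕ} (hli : LinearIndependent ℂ fun P : A => vero n m P.1)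
    (hmt : m ≤ t) : LinearIndependent ℂ fun P : A => vero n t P.1 :=
  Nat.le_induction hli (fun _ _ => linearIndependent_vero_succ) t hmt

lemma mem_of_vero_succ_mem_veroSpan (hli : LinearIndependent ℂ fun P : A => vero n t P.1)
    {Q : Proj n} (hQ : vero n (t + 1) Q ∈ veroSpan n (t + 1) A) : Q ∈ A := by
  by_contra hQA
  obtain ⟨e, he⟩ := mem_veroSpan_iff.mp hQ
  have he0 : ∀ P, e P = 0 := fun P => by
    obtain ⟨c, hcQ, hcP⟩ :=
      exists_dotProduct_rep_eq_zero_ne_zero fun h : P.1 = Q => hQA (h ▸ P.2)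
    have hD : dirDeriv c (∑ R, e R • vero n (t + 1) R.1) = 0 := by
      rw [he, vero, dirDeriv_linForm_pow_succ, hcQ, mul_zero, zero_smul]
    exact (mul_eq_zero.mp (mul_dotProduct_eq_zero_of_dirDeriv_sum_eq_zero hli hD P)).resolve_right
      hcP
  simp only [he0, zero_smul, Finset.sum_const_zero] at he
  exact pow_ne_zero _ (linForm_ne_zero Q.rep_nonzero) he.symm

lemma span_range_dotProduct_pow_eq_top (hli : LinearIndependent ℂ fun P : A => vero n t P.1) :
    Submodule.span ℂ (Set.range fun (c : Fin (n + 1) → ℂ) (P : A) => (c ⬝ᵥ P.1.rep) ^ t) = ⊤ := by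
  classical
  rw [← Submodule.dualAnnihilator_eq_bot_iff, Submodule.eq_bot_iff]
  intro φ hφ
  set f : A → ℂ := fun P => φ fun Q => if P = Q then 1 else 0
  have hpoly : ∑ P, f P • vero n t P.1 = 0 := MvPolynomial.funext fun c => by
    have := (Submodule.mem_dualAnnihilator _).mp hφ _ (Submodule.subset_span ⟨c, rfl⟩)
    rw [φ.pi_apply_eq_sum_univ] at this
    simp only [map_sum, smul_eval, vero, map_pow, eval_linForm, map_zero]
    rw [← this]
    exact Finset.sum_congr rfl fun P _ => by rw [dotProduct_comm, smul_eq_mul, mul_comm]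
  have hf := Fintype.linearIndependent_iff.mp hli f hpoly
  exact LinearMap.ext fun g => by simp [φ.pi_apply_eq_sum_univ g, hf, f]

end Independence

lemma veroSpan_le_of_sum_eq {k t : ℕ} {A B : Finset (Proj n)} {T : MvPolynomial (Fin (n + 1)) ℂ}
    {a : A → ℂ} (ha : ∀ P, a P ≠ 0) (hT : ∑ P, a P • vero n (k + t) P.1 = T)
    (hli : LinearIndependent ℂ fun P : A => vero n t P.1) (hB : T ∈ veroSpan n (k + t) B) :
    veroSpan n k A ≤ veroSpan n k B := by
  classical
  set Ψ := Fintype.linearCombination ℂ fun P : A => a P • vero n k P.1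
  have hderiv : ∀ c, ((dirDeriv c).toLinearMap ^ t) T ∈ veroSpan n k B := by
    intro c
    have hspan : veroSpan n (k + t) B ≤ (veroSpan n k B).comap ((dirDeriv c).toLinearMap ^ t) := by
      refine Submodule.span_le.mpr ?_
      rintro _ ⟨Q, hQ, rfl⟩
      rw [SetLike.mem_coe, Submodule.mem_comap, vero, dirDeriv_pow_apply_linForm_pow]
      exact Submodule.smul_mem _ _ (Submodule.subset_span ⟨Q, hQ, rfl⟩)
    exact hspan hB
  have hΨ : ∀ c, ((dirDeriv c).toLinearMap ^ t) T
      = ((k + t).descFactorial t : ℂ) • Ψ fun P => (c ⬝ᵥ P.1.rep) ^ t := by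
    intro c
    simp only [← hT, Ψ, Fintype.linearCombination_apply, map_sum, map_smul, vero,
      dirDeriv_pow_apply_linForm_pow, Finset.smul_sum, smul_smul]
    exact Finset.sum_congr rfl fun P _ => by ring_nf
  have hdesc : ((k + t).descFactorial t : ℂ) ≠ 0 := by
    rw [Nat.cast_ne_zero, Ne, Nat.descFactorial_eq_zero_iff_lt]
    omega
  have hrange : ⊤ ≤ (veroSpan n k B).comap Ψ := by
    rw [← span_range_dotProduct_pow_eq_top hli, Submodule.span_le]
    rintro _ ⟨c, rfl⟩
    rw [SetLike.mem_coe, Submodule.mem_comap, ← Submodule.smul_mem_iff _ hdesc, ← hΨ]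
    exact hderiv c
  refine Submodule.span_le.mpr ?_
  rintro _ ⟨P, hP, rfl⟩
  have := hrange (Submodule.mem_top (x := Pi.single ⟨P, hP⟩ (a ⟨P, hP⟩)⁻¹))
  rwa [Submodule.mem_comap, Fintype.linearCombination_apply_single, inv_smul_smul₀ (ha _)] at this

section Identifiability

variable {m d : ℕ} {A : Finset (Proj n)} {T : MvPolynomial (Fin (n + 1)) ℂ}

lemma veroSpan_succ_le_of_computes (hd : 2 * m + 1 ≤ d) (hA : NRComputes n d A T)
    (hli : LinearIndependent ℂ fun P : A => vero n m P.1) {B : Finset (Proj n)}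
    (hB : Computes n d B T) : veroSpan n (m + 1) A ≤ veroSpan n (m + 1) B := by
  obtain ⟨t, rfl⟩ : ∃ t, d = m + 1 + t := ⟨d - (m + 1), by omega⟩
  obtain ⟨a, ha, hT⟩ := hA.exists_sum_eq
  exact veroSpan_le_of_sum_eq ha hT (linearIndependent_vero_of_le hli (by omega)) hB

lemma card_le_of_computes (hd : 2 * m + 1 ≤ d) (hA : NRComputes n d A T)
    (hli : LinearIndependent ℂ fun P : A => vero n m P.1) {B : Finset (Proj n)}
    (hB : Computes n d B T) : A.card ≤ B.card :=
  calc A.card = Module.finrank ℂ (veroSpan n (m + 1) A) :=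
        (finrank_veroSpan_of_linearIndependent (linearIndependent_vero_succ hli)).symm
    _ ≤ Module.finrank ℂ (veroSpan n (m + 1) B) :=
        Submodule.finrank_mono (veroSpan_succ_le_of_computes hd hA hli hB)
    _ ≤ B.card := finrank_veroSpan_le_card _ _

lemma eq_of_computes_of_card_eq (hd : 2 * m + 1 ≤ d) (hA : NRComputes n d A T)
    (hli : LinearIndependent ℂ fun P : A => vero n m P.1) {B : Finset (Proj n)}
    (hB : Computes n d B T) (hcard : B.card = A.card) : B = A := by
  have hspan : veroSpan n (m + 1) A = veroSpan n (m + 1) B := by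
    refine Submodule.eq_of_le_of_finrank_le (veroSpan_succ_le_of_computes hd hA hli hB) ?_
    rw [finrank_veroSpan_of_linearIndependent (linearIndependent_vero_succ hli), ← hcard]
    exact finrank_veroSpan_le_card _ _
  refine Finset.eq_of_subset_of_card_le (fun Q hQ => ?_) hcard.ge
  exact mem_of_vero_succ_mem_veroSpan hli (hspan ▸ Submodule.subset_span ⟨Q, hQ, rfl⟩)

theorem waringRank_eq_card_of_linearIndependent (hd : 2 * m + 1 ≤ d) (hA : NRComputes n d A T)
    (hli : LinearIndependent ℂ fun P : A => vero n m P.1) : waringRank n d T = A.card :=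
  le_antisymm (Nat.sInf_le ⟨A, rfl, hA.1⟩) <|
    le_csInf ⟨_, A, rfl, hA.1⟩ fun _ ⟨_, hcard, hB⟩ => hcard ▸ card_le_of_computes hd hA hli hB

theorem identifiable_of_linearIndependent (hd : 2 * m + 1 ≤ d) (hA : NRComputes n d A T)
    (hli : LinearIndependent ℂ fun P : A => vero n m P.1) : Identifiable n d T := by
  have hrank := waringRank_eq_card_of_linearIndependent hd hA hli
  refine ⟨A, ⟨hrank.symm, hA.1⟩, fun B ⟨hcard, hB⟩ => ?_⟩
  exact eq_of_computes_of_card_eq hd hA hli hB (hcard.trans hrank)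

lemma linearIndependent_vero_of_kruskalRank_eq_card (hk : kruskalRank n m A = A.card) :
    LinearIndependent ℂ fun P : A => vero n m P.1 := by
  set S := {k | k ≤ A.card ∧
    ∀ A' ⊆ A, A'.card ≤ k → LinearIndependent ℂ (fun P : A' => vero n m P.1)}
  have h0 : 0 ∈ S := ⟨Nat.zero_le _, fun A' _ hA' => by
    obtain rfl := Finset.card_eq_zero.mp (Nat.le_zero.mp hA')
    exact linearIndependent_empty_type⟩
  have hmem : sSup S ∈ S := Nat.sSup_mem ⟨0, h0⟩ ⟨A.card, fun _ hk => hk.1⟩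
  exact hmem.2 A subset_rfl hk.ge

end Identifiability

end

theorem stmt19_general (n m : ℕ) (d : ℕ) (hd : d = 2 * m + 1)
    (T : MvPolynomial (Fin (n + 1)) ℂ)
    (A : Finset (Proj n)) (hA : NRComputes n d A T) (r : ℕ) (hr : r = A.card)
    (hk : kruskalRank n m A = r) :
    waringRank n d T = r ∧ Identifiable n d T := by
  subst hr
  have hli := linearIndependent_vero_of_kruskalRank_eq_card hk
  exact ⟨waringRank_eq_card_of_linearIndependent hd.ge hA hli,
    identifiable_of_linearIndependent hd.ge hA hli⟩

/-- Proposition (many variables, odd case): if `d = 2m+1 ≥ 3`, `n ≥ 1`,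
`h_A(1) = min{n+1, r}`, `k_m(A) = r` and `2(r - h_A(m-1)) ≤ min{n-1, m-1}`, then `T`
has rank `r` and is identifiable. -/
theorem stmt19 (n m : ℕ) (hn : 1 ≤ n) (hm : 1 ≤ m) (d : ℕ) (hd : d = 2 * m + 1)
    (hd3 : 3 ≤ d)
    (T : MvPolynomial (Fin (n + 1)) ℂ) (hT0 : T ≠ 0) (hTh : T.IsHomogeneous d)
    (A : Finset (Proj n)) (hA : NRComputes n d A T) (r : ℕ) (hr : r = A.card)
    (h1 : hilbN n A 1 = min (n + 1) r)
    (hk : kruskalRank n m A = r)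
    (h2 : 2 * ((r : ℤ) - (hilbN n A (m - 1) : ℤ)) ≤ min ((n : ℤ) - 1) ((m : ℤ) - 1)) :
    waringRank n d T = r ∧ Identifiable n d T :=
  stmt19_general n m d hd T A hA r hr hk
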